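/- Let (A,≺,≻) be a Leibniz dendriform algebra over a field K and let α₁,α₂: A→A be two morphisms of (A,≺,≻) (i.e. linear maps preserving both ≺ and ≻) with α₁∘α₂ = α₂∘α₁. Define x ≺' y = α₁(x) ≺ α₂(y) and x ≻' y = α₁(x) ≻ α₂(y). Then (A, ≺', ≻', α₁, α₂) is a BiHom-Leibniz dendriform algebra. Moreover, if (A'',≺'',≻'') is another Leibniz dendriform algebra, α₁'',α₂'': A''→A'' are two commuting morphisms of (A'',≺'',≻''), and f: A→A'' is a morphism of Leibniz dendriform algebras satisfying f∘α₁ = α₁''∘f and f∘α₂ = α₂''∘f, then f is a morphism of the resulting BiHom-Leibniz dendriform algebras, i.e. f(α₁(x)≺α₂(y)) = α₁''(f(x))≺''α₂''(f(y)) and f(α₁(x)≻α₂(y)) = α₁''(f(x))≻''α₂''(f(y)) for all x,y ∈ A. -/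
import Mathlib


/-- A Leibniz dendriform algebra `(A, ≺, ≻)`, with `p = ≺`, `s = ≻` and
`[x,y] = x≺y + x≻y`. -/
def LeibnizDendriform {K A : Type*} [Field K] [AddCommGroup A] [Module K A]
    (p s : A →ₗ[K] A →ₗ[K] A) : Prop :=
  (∀ x y z : A, s (p x y + s x y) z = s x (s y z) - s y (s x z)) ∧
  (∀ x y z : A, s x (p y z) = p (s x y) z + p y (p x z + s x z)) ∧
  (∀ x y z : A, p x (p y z + s y z) = p (p x y) z + s y (p x z))

/-- A BiHom-Leibniz dendriform algebra `(A, ≺, ≻, α, β)`, with `p = ≺`,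
`s = ≻` and `[x,y] = x≺y + x≻y`. -/
def BiHomLeibnizDendriform {K A : Type*} [Field K] [AddCommGroup A] [Module K A]
    (p s : A →ₗ[K] A →ₗ[K] A) (α β : A →ₗ[K] A) : Prop :=
  (∀ x : A, α (β x) = β (α x)) ∧
  (∀ x y z : A, s (p (β x) y + s (β x) y) (β z) =
      s (α (β x)) (s y z) - s (β y) (s (α x) z)) ∧
  (∀ x y z : A, s (α (β x)) (p y z) =
      p (s (β x) y) (β z) + p (β y) (p (α x) z + s (α x) z)) ∧
  (∀ x y z : A, p (α (β x)) (p y z + s y z) =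
      p (p (β x) y) (β z) + s (β y) (p (α x) z))

/-- a Leibniz dendriform algebra with two commuting morphisms
`α₁, α₂` yields a BiHom-Leibniz dendriform algebra with operations
`x ≺' y = α₁(x) ≺ α₂(y)` and `x ≻' y = α₁(x) ≻ α₂(y)`; moreover compatible
morphisms of Leibniz dendriform algebras are morphisms of the resulting
BiHom-Leibniz dendriform algebras. -/
theorem biHomLeibnizDendriform_of_leibnizDendriform
    {K A B : Type*} [Field K] [AddCommGroup A] [Module K A]
    [AddCommGroup B] [Module K B]
    (p s : A →ₗ[K] A →ₗ[K] A)
    (hA : LeibnizDendriform p s)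
    (α₁ α₂ : A →ₗ[K] A)
    (hα₁p : ∀ x y : A, α₁ (p x y) = p (α₁ x) (α₁ y))
    (hα₁s : ∀ x y : A, α₁ (s x y) = s (α₁ x) (α₁ y))
    (hα₂p : ∀ x y : A, α₂ (p x y) = p (α₂ x) (α₂ y))
    (hα₂s : ∀ x y : A, α₂ (s x y) = s (α₂ x) (α₂ y))
    (hcomm : ∀ x : A, α₁ (α₂ x) = α₂ (α₁ x))
    (p' s' : B →ₗ[K] B →ₗ[K] B)
    (hB : LeibnizDendriform p' s')
    (α₁' α₂' : B →ₗ[K] B)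
    (hα₁'p : ∀ x y : B, α₁' (p' x y) = p' (α₁' x) (α₁' y))
    (hα₁'s : ∀ x y : B, α₁' (s' x y) = s' (α₁' x) (α₁' y))
    (hα₂'p : ∀ x y : B, α₂' (p' x y) = p' (α₂' x) (α₂' y))
    (hα₂'s : ∀ x y : B, α₂' (s' x y) = s' (α₂' x) (α₂' y))
    (hcomm' : ∀ x : B, α₁' (α₂' x) = α₂' (α₁' x))
    (f : A →ₗ[K] B)
    (hfp : ∀ x y : A, f (p x y) = p' (f x) (f y))
    (hfs : ∀ x y : A, f (s x y) = s' (f x) (f y))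
    (hfα₁ : ∀ x : A, f (α₁ x) = α₁' (f x))
    (hfα₂ : ∀ x : A, f (α₂ x) = α₂' (f x)) :
    BiHomLeibnizDendriform ((p.comp α₁).compl₂ α₂) ((s.comp α₁).compl₂ α₂)
      α₁ α₂ ∧
    (∀ x y : A, f (p (α₁ x) (α₂ y)) = p' (α₁' (f x)) (α₂' (f y))) ∧
    (∀ x y : A, f (s (α₁ x) (α₂ y)) = s' (α₁' (f x)) (α₂' (f y))) := by

  obtain ⟨h1, h2, h3⟩ := hA
  refine ⟨⟨hcomm, ?_, ?_, ?_⟩,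
    fun x y => by simp [hfp, hfα₁, hfα₂],
    fun x y => by simp [hfs, hfα₁, hfα₂]⟩
  · intro x y z
    simp only [LinearMap.compl₂_apply, LinearMap.comp_apply, map_add,
      LinearMap.add_apply, hα₁p, hα₁s, hα₂p, hα₂s, hcomm]
    have H := h1 (α₂ (α₁ (α₁ x))) (α₂ (α₁ y)) (α₂ (α₂ z))
    simp only [map_add, LinearMap.add_apply, hcomm] at H ⊢
    exact H
  · intro x y z
    simp only [LinearMap.compl₂_apply, LinearMap.comp_apply, map_add,
      LinearMap.add_apply, hα₁p, hα₁s, hα₂p, hα₂s, hcomm]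
    have H := h2 (α₂ (α₁ (α₁ x))) (α₂ (α₁ y)) (α₂ (α₂ z))
    simp only [map_add, LinearMap.add_apply, hcomm] at H ⊢
    exact H
  · intro x y z
    simp only [LinearMap.compl₂_apply, LinearMap.comp_apply, map_add,
      LinearMap.add_apply, hα₁p, hα₁s, hα₂p, hα₂s, hcomm]
    have H := h3 (α₂ (α₁ (α₁ x))) (α₂ (α₁ y)) (α₂ (α₂ z))
    simp only [map_add, LinearMap.add_apply, hcomm] at H ⊢
    exact H
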